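/- arXiv:2310.06612 — 5 statements merged into one kernel-verified Lean document; each statement's English description precedes it below -/
import Mathlib

section
/- Let n be an integer with n ≥ 3 and let k be an integer with 1 ≤ k ≤ ⌊n/2⌋. Then mbt(C(n,k)) ≥ Δ(C(n,k)) if n is even and k is odd, and mbt(C(n,k)) ≥ Δ(C(n,k)) + 1 in all other cases. -/
open SimpleGraph

/-- The circulant graph `C(ℤ_n, S)`: vertices are `ZMod n`, and distinct `i, j` are
adjacent iff `i - j ≡ s` or `i - j ≡ -s (mod n)` for some `s ∈ S`. -/
def circulant (n : ℕ) (S : Set ℤ) : SimpleGraph (ZMod n) :=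
  SimpleGraph.fromRel fun i j => ∃ s ∈ S, i - j = (s : ZMod n)

/-- `C(n,k) = C(ℤ_n, {1, k})`. -/
def circ (n k : ℕ) : SimpleGraph (ZMod n) := circulant n {1, (k : ℤ)}

/-- The maximum degree `Δ(G)` of a graph. -/
noncomputable def maxDeg {V : Type*} (G : SimpleGraph V) : ℕ :=
  sSup (Set.range fun v => (G.neighborSet v).ncard)

/-- `x` lies strictly between positions `a` and `b` on the circular layout
(cut open along the linear order of `Fin N`). -/
def ChordBetween {N : ℕ} (x a b : Fin N) : Prop := min a b < x ∧ x < max a b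

/-- The chords joining the positions `a,b` and `c,d` on a circle cross iff exactly one of
`c, d` lies strictly between `a` and `b`. -/
def ChordCross {N : ℕ} (a b c d : Fin N) : Prop :=
  Xor' (ChordBetween c a b) (ChordBetween d a b)

/-- `G` admits a matching book embedding in `m` pages: there is a circular layout
(a bijection of the vertices with `Fin (Nat.card V)`) and a proper edge coloring with
`m` colors such that crossing edges get distinct colors. -/
def HasMBE {V : Type*} (G : SimpleGraph V) (m : ℕ) : Prop :=
  ∃ (σ : V ≃ Fin (Nat.card V)) (col : V → V → Fin m),
    (∀ u v, G.Adj u v → col u v = col v u) ∧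
    (∀ u v w, G.Adj u v → G.Adj u w → v ≠ w → col u v ≠ col u w) ∧
    (∀ a b c d, G.Adj a b → G.Adj c d →
      ChordCross (σ a) (σ b) (σ c) (σ d) → col a b ≠ col c d)

/-- The matching book thickness `mbt(G)`. -/
noncomputable def mbt {V : Type*} (G : SimpleGraph V) : ℕ :=
  sInf {m | HasMBE G m}

/-- The remainder algorithm from the paper: `k₀ = k`, `r₀ = r`,
`k_{i+1} = k_i - r_i`, `r_{i+1} = k_i mod k_{i+1}`. -/
def euclidSeq (k r : ℕ) : ℕ → ℕ × ℕ
  | 0 => (k, r)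
  | i + 1 =>
      ((euclidSeq k r i).1 - (euclidSeq k r i).2,
       (euclidSeq k r i).1 % ((euclidSeq k r i).1 - (euclidSeq k r i).2))

/-!
A proper edge colouring with `Δ` colours of the `Δ`-regular graph `C(n,k)` forces every colour
class to be a perfect matching, so `mbt = Δ` is impossible for odd `n`. In a matching book
embedding, the colour class of an edge `uv` does not cross `uv`, so it matches the vertices
strictly between `u` and `v` among themselves: their number is even, hence the layout positions
of adjacent vertices have opposite parity and the graph is bipartite. For even `k` this
contradicts the odd closed walk `0, 1, …, k, 0`.
-/

open Function

lemma even_natCard_of_involutive {α : Type*} [Finite α] {f : α → α} (hf : Involutive f)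
    (hfix : ∀ a, f a ≠ a) : Even (Nat.card α) := by
  classical
  have := Fintype.ofFinite α
  have hsupp : (hf.toPerm f).support = Finset.univ :=
    Finset.eq_univ_of_forall fun a => Equiv.Perm.mem_support.2 (hfix a)
  have h2 := Equiv.Perm.two_dvd_card_support (σ := hf.toPerm f) (Equiv.ext hf)
  rw [hsupp, Finset.card_univ] at h2
  exact Nat.card_eq_fintype_card (α := α) ▸ even_iff_two_dvd.2 h2

section Chords

variable {N : ℕ}

lemma not_chordBetween_left (a b : Fin N) : ¬ ChordBetween a a b := by
  rintro ⟨h1, h2⟩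
  rcases le_total a b with h | h
  · exact (min_eq_left h ▸ h1).false
  · exact (max_eq_left h ▸ h2).false

lemma not_chordBetween_right (a b : Fin N) : ¬ ChordBetween b a b := by
  rintro ⟨h1, h2⟩
  rcases le_total a b with h | h
  · exact (max_eq_right h ▸ h2).false
  · exact (min_eq_right h ▸ h1).false

lemma not_chordCross_self (a b : Fin N) : ¬ ChordCross a b a b := by
  rintro (⟨h, -⟩ | ⟨h, -⟩)
  · exact not_chordBetween_left a b h
  · exact not_chordBetween_right a b h

lemma not_chordCross_swap (a b : Fin N) : ¬ ChordCross a b b a := by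
  rintro (⟨h, -⟩ | ⟨h, -⟩)
  · exact not_chordBetween_right a b h
  · exact not_chordBetween_left a b h

lemma natCard_chordBetween {a b : Fin N} (h : a < b) :
    Nat.card {z // ChordBetween z a b} = b - a - 1 := by
  have hmem : ∀ z, ChordBetween z a b ↔ z ∈ Finset.Ioo a b := fun z => by
    rw [ChordBetween, min_eq_left h.le, max_eq_right h.le, Finset.mem_Ioo]
  rw [Nat.card_congr (Equiv.subtypeEquivRight hmem), Nat.card_eq_finsetCard, Fin.card_Ioo]

end Chords

section MatchingBookEmbedding

variable {V : Type*} {G : SimpleGraph V}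

lemma hasMBE_card_sym2 [Finite V] (G : SimpleGraph V) : HasMBE G (Nat.card (Sym2 V)) := by
  let e := Finite.equivFin (Sym2 V)
  refine ⟨Finite.equivFin V, fun u v => e s(u, v), fun u v _ => congrArg e Sym2.eq_swap,
    fun u v w _ _ hvw h => hvw (Sym2.congr_right.1 (e.injective h)),
    fun a b c d _ _ hcross h => ?_⟩
  rcases Sym2.eq_iff.1 (e.injective h) with ⟨rfl, rfl⟩ | ⟨rfl, rfl⟩
  · exact not_chordCross_self _ _ hcross
  · exact not_chordCross_swap _ _ hcross

lemma hasMBE_mbt [Finite V] (G : SimpleGraph V) : HasMBE G (mbt G) :=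
  Nat.sInf_mem (s := {m | HasMBE G m}) ⟨_, hasMBE_card_sym2 G⟩

lemma injOn_neighborSet_of_proper {α : Type*} {col : V → V → α}
    (hprop : ∀ u v w, G.Adj u v → G.Adj u w → v ≠ w → col u v ≠ col u w) (v : V) :
    Set.InjOn (col v) (G.neighborSet v) := fun w hw w' hw' hcol =>
  by_contra fun hne => hprop v w w' hw hw' hne hcol

lemma HasMBE.ncard_neighborSet_le {m : ℕ} (h : HasMBE G m) (v : V) :
    (G.neighborSet v).ncard ≤ m := by
  obtain ⟨-, col, -, hprop, -⟩ := h
  have hinj := injOn_neighborSet_of_proper hprop v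
  calc (G.neighborSet v).ncard = (col v '' G.neighborSet v).ncard :=
        hinj.ncard_image.symm
    _ ≤ (Set.univ : Set (Fin m)).ncard := Set.ncard_le_ncard (Set.subset_univ _)
    _ = m := by rw [Set.ncard_univ, Nat.card_eq_fintype_card, Fintype.card_fin]

/-- The colour class `c` is a perfect matching; `f` sends a vertex to its partner. -/
lemma exists_colorClass_involution {d : ℕ} (hreg : ∀ v, (G.neighborSet v).ncard = d)
    {col : V → V → Fin d} (hsym : ∀ u v, G.Adj u v → col u v = col v u)
    (hprop : ∀ u v w, G.Adj u v → G.Adj u w → v ≠ w → col u v ≠ col u w) (c : Fin d) :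
    ∃ f : V → V, Involutive f ∧ (∀ v, G.Adj v (f v) ∧ col v (f v) = c) ∧
      ∀ v w, G.Adj v w → col v w = c → f v = w := by
  have hex : ∀ v, ∃ w, G.Adj v w ∧ col v w = c := by
    intro v
    have hinj := injOn_neighborSet_of_proper hprop v
    have himg : col v '' G.neighborSet v = Set.univ := by
      refine Set.eq_of_subset_of_ncard_le (Set.subset_univ _) ?_ Set.finite_univ
      rw [hinj.ncard_image, hreg, Set.ncard_univ, Nat.card_eq_fintype_card,
        Fintype.card_fin]
    exact (show c ∈ col v '' G.neighborSet v from himg ▸ Set.mem_univ c)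
  choose f hfadj hfcol using hex
  have huniq : ∀ v w, G.Adj v w → col v w = c → f v = w := fun v w hvw hc => by
    by_contra hne
    exact hprop v (f v) w (hfadj v) hvw hne (by rw [hfcol, hc])
  refine ⟨f, fun v => huniq _ _ (hfadj v).symm ?_, fun v => ⟨hfadj v, hfcol v⟩, huniq⟩
  rw [← hsym _ _ (hfadj v), hfcol]

lemma HasMBE.even_natCard [Finite V] {d : ℕ} (hreg : ∀ v, (G.neighborSet v).ncard = d)
    (hd : 0 < d) (h : HasMBE G d) : Even (Nat.card V) := by
  obtain ⟨-, col, hsym, hprop, -⟩ := h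
  obtain ⟨f, hf, hfadj, -⟩ := exists_colorClass_involution hreg hsym hprop ⟨0, hd⟩
  exact even_natCard_of_involutive hf fun v hv => (hfadj v).1.ne hv.symm

/-- In a matching book embedding of a `d`-regular graph in `d` pages, the vertices strictly
between the ends of an edge are matched among themselves by the colour class of that edge, so
the two ends sit at layout positions of opposite parity. -/
lemma HasMBE.colorable_two [Finite V] {d : ℕ} (hreg : ∀ v, (G.neighborSet v).ncard = d)
    (h : HasMBE G d) : G.Colorable 2 := by
  obtain ⟨σ, col, hsym, hprop, hcross⟩ := h
  suffices hpar : ∀ u v, G.Adj u v → σ u < σ v → (σ u).val % 2 ≠ (σ v).val % 2 by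
    refine ⟨Coloring.mk (fun v => ⟨(σ v).val % 2, Nat.mod_lt _ two_pos⟩)
      fun {u v} huv heq => ?_⟩
    rcases lt_or_gt_of_ne (σ.injective.ne huv.ne) with hlt | hlt
    · exact hpar u v huv hlt (Fin.mk.inj_iff.1 heq)
    · exact hpar v u huv.symm hlt (Fin.mk.inj_iff.1 heq).symm
  intro u v huv hlt
  obtain ⟨f, hf, hfadj, -⟩ := exists_colorClass_involution hreg hsym hprop (col u v)
  have hmaps : ∀ w, ChordBetween (σ w) (σ u) (σ v) → ChordBetween (σ (f w)) (σ u) (σ v) :=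
    fun w hw => by
      by_contra hfw
      exact hcross u v w (f w) huv (hfadj w).1 (Or.inl ⟨hw, hfw⟩) (hfadj w).2.symm
  have heven : Even (Nat.card {w // ChordBetween (σ w) (σ u) (σ v)}) :=
    even_natCard_of_involutive (f := fun w => ⟨f w.1, hmaps w.1 w.2⟩)
      (fun w => Subtype.ext (hf w.1)) fun w hw => (hfadj w.1).1.ne (congrArg Subtype.val hw).symm
  rw [Nat.card_congr (σ.subtypeEquiv (p := fun w => ChordBetween (σ w) (σ u) (σ v))
    (q := fun z => ChordBetween z (σ u) (σ v)) fun _ => Iff.rfl),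
    natCard_chordBetween hlt] at heven
  have hlt' : (σ u).val < (σ v).val := hlt
  obtain ⟨t, ht⟩ := heven
  omega

end MatchingBookEmbedding

lemma maxDeg_eq_of_forall_ncard_neighborSet_eq {V : Type*} [Nonempty V] {G : SimpleGraph V}
    {d : ℕ} (hreg : ∀ v, (G.neighborSet v).ncard = d) : maxDeg G = d := by
  rw [maxDeg, funext hreg, Set.range_const, csSup_singleton]

section Circulant

variable {n k : ℕ}

lemma circ_adj_add_right (u v t : ZMod n) :
    (circ n k).Adj (u + t) (v + t) ↔ (circ n k).Adj u v := by
  simp only [circ, circulant, fromRel_adj, add_sub_add_right_eq_sub, ne_eq, add_left_inj]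

lemma circ_adj_add_one [Fact (1 < n)] (a : ZMod n) : (circ n k).Adj a (a + 1) :=
  ⟨by simp, Or.inr ⟨1, Or.inl rfl, by simp⟩⟩

lemma circ_adj_natCast_zero (hk : (k : ZMod n) ≠ 0) : (circ n k).Adj (k : ZMod n) 0 :=
  ⟨by simpa using hk, Or.inl ⟨k, Or.inr rfl, by simp⟩⟩

lemma circ_neighborSet_eq_image (v : ZMod n) :
    (circ n k).neighborSet v = (· + v) '' (circ n k).neighborSet 0 := by
  ext w
  rw [Set.image_add_right, Set.mem_preimage, mem_neighborSet, mem_neighborSet,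
    ← circ_adj_add_right _ _ (-v), add_neg_cancel]

lemma circ_ncard_neighborSet (v : ZMod n) :
    ((circ n k).neighborSet v).ncard = ((circ n k).neighborSet 0).ncard := by
  rw [circ_neighborSet_eq_image, Set.ncard_image_of_injective _ (add_left_injective v)]

lemma circ_ncard_neighborSet_zero_pos [Fact (1 < n)] :
    0 < ((circ n k).neighborSet 0).ncard :=
  (Set.ncard_pos (Set.toFinite _)).2 ⟨0 + 1, circ_adj_add_one 0⟩

lemma circ_exists_walk_natCast [Fact (1 < n)] (j : ℕ) :
    ∃ w : (circ n k).Walk 0 (j : ZMod n), w.length = j := by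
  induction j with
  | zero => exact ⟨Walk.nil.copy rfl Nat.cast_zero.symm, by simp⟩
  | succ j ih =>
    obtain ⟨w, hw⟩ := ih
    have hadj : (circ n k).Adj (j : ZMod n) ((j + 1 : ℕ) : ZMod n) := by
      rw [Nat.cast_succ]
      exact circ_adj_add_one _
    exact ⟨w.concat hadj, by rw [Walk.length_concat, hw]⟩

lemma circ_not_colorable_two [Fact (1 < n)] (hk : (k : ZMod n) ≠ 0) (hke : Even k) :
    ¬ (circ n k).Colorable 2 := by
  rw [two_colorable_iff_forall_loop_even]
  intro h
  obtain ⟨w, hw⟩ := circ_exists_walk_natCast (n := n) (k := k) k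
  have := h 0 (w.concat (circ_adj_natCast_zero hk))
  rw [Walk.length_concat, hw] at this
  exact Nat.not_even_iff_odd.2 hke.add_one this

end Circulant

theorem stmt0_general (n k : ℕ) (hk1 : 1 ≤ k) (hk2 : k ≤ n / 2) :
    (Even n ∧ Odd k → maxDeg (circ n k) ≤ mbt (circ n k)) ∧
    (¬(Even n ∧ Odd k) → maxDeg (circ n k) + 1 ≤ mbt (circ n k)) := by
  have : Fact (1 < n) := ⟨by omega⟩
  have hk : (k : ZMod n) ≠ 0 := by
    rw [Ne, ZMod.natCast_eq_zero_iff]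
    exact Nat.not_dvd_of_pos_of_lt (by omega) (by omega)
  set d := ((circ n k).neighborSet 0).ncard
  have hreg : ∀ v, ((circ n k).neighborSet v).ncard = d := circ_ncard_neighborSet
  rw [maxDeg_eq_of_forall_ncard_neighborSet_eq hreg]
  have hle : d ≤ mbt (circ n k) := (hasMBE_mbt _).ncard_neighborSet_le 0
  refine ⟨fun _ => hle, fun hnk => ?_⟩
  by_contra! hge
  have hmbe : HasMBE (circ n k) d := le_antisymm (by omega) hle ▸ hasMBE_mbt _
  rcases Nat.even_or_odd n with hn | hn
  · exact circ_not_colorable_two hk (by simpa [hn] using hnk) (hmbe.colorable_two hreg)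
  · refine Nat.not_even_iff_odd.2 hn ?_
    simpa using hmbe.even_natCard hreg circ_ncard_neighborSet_zero_pos

/-- lower bounds on the matching book thickness of `C(n,k)`. -/
theorem stmt0 (n k : ℕ) (hn : 3 ≤ n) (hk1 : 1 ≤ k) (hk2 : k ≤ n / 2) :
    (Even n ∧ Odd k → maxDeg (circ n k) ≤ mbt (circ n k)) ∧
    (¬(Even n ∧ Odd k) → maxDeg (circ n k) + 1 ≤ mbt (circ n k)) :=
  stmt0_general n k hk1 hk2
end

section
/- Let n ≥ 3 and let k₁, k₂ be integers with 1 ≤ k₁, k₂ ≤ ⌊n/2⌋, set d₁ = gcd(n,k₁), d₂ = gcd(n,k₂), and suppose 1 < d₁ < d₂ < n/2 and gcd(d₁,d₂) = 1. Let (x₁, y₁) be the unique integer solution of (k₁/d₁)·x − (n/d₁)·y = k₂ with 0 ≤ x₁ ≤ n/d₁ − 1. Then x₁ = 0 if and only if d₁·d₂ ≡ 0 (mod n). -/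
open SimpleGraph

/-- with `1 < d₁ < d₂ < n/2`, `gcd(d₁,d₂) = 1`, and `(x₁, y₁)` the unique
solution of `(k₁/d₁)·x - (n/d₁)·y = k₂` with `0 ≤ x₁ ≤ n/d₁ - 1`, one has
`x₁ = 0 ↔ d₁·d₂ ≡ 0 (mod n)`. -/
theorem stmt9 (n k₁ k₂ : ℕ) (hn : 3 ≤ n) (h₁ : 1 ≤ k₁) (h₁' : k₁ ≤ n / 2)
    (h₂ : 1 ≤ k₂) (h₂' : k₂ ≤ n / 2)
    (hd₁ : 1 < Nat.gcd n k₁) (hdd : Nat.gcd n k₁ < Nat.gcd n k₂)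
    (hd₂ : 2 * Nat.gcd n k₂ < n)
    (hcop : Nat.gcd (Nat.gcd n k₁) (Nat.gcd n k₂) = 1)
    (x₁ y₁ : ℤ)
    (heq : ((k₁ / Nat.gcd n k₁ : ℕ) : ℤ) * x₁ - ((n / Nat.gcd n k₁ : ℕ) : ℤ) * y₁ = (k₂ : ℤ))
    (hx₁ : 0 ≤ x₁) (hx₁' : x₁ ≤ ((n / Nat.gcd n k₁ : ℕ) : ℤ) - 1) :
    x₁ = 0 ↔ n ∣ Nat.gcd n k₁ * Nat.gcd n k₂ := by
  set d₁ := Nat.gcd n k₁ with hd₁def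
  set d₂ := Nat.gcd n k₂ with hd₂def
  have hd1n : d₁ ∣ n := Nat.gcd_dvd_left _ _
  have hd1pos : 0 < d₁ := by omega
  have hnd : n = d₁ * (n / d₁) := (Nat.mul_div_cancel' hd1n).symm
  have hndpos : 0 < n / d₁ := Nat.div_pos (Nat.le_of_dvd (by omega) hd1n) hd1pos
  constructor
  · intro h0
    subst h0
    have hdvd : ((n / d₁ : ℕ) : ℤ) ∣ (k₂ : ℤ) := ⟨-y₁, by linarith⟩
    have hdvdn : (n / d₁) ∣ k₂ := by exact_mod_cast hdvd
    have h1 : (n / d₁) ∣ d₂ := Nat.dvd_gcd ⟨d₁, (Nat.div_mul_cancel hd1n).symm⟩ hdvdn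
    calc n = d₁ * (n / d₁) := hnd
    _ ∣ d₁ * d₂ := mul_dvd_mul_left _ h1
  · intro h
    have h1 : (n / d₁) ∣ d₂ := by
      rw [hnd] at h
      exact (mul_dvd_mul_iff_left (by omega : d₁ ≠ 0)).mp h
    have h2 : (n / d₁) ∣ k₂ := h1.trans (Nat.gcd_dvd_right _ _)
    have h3 : ((n / d₁ : ℕ) : ℤ) ∣ ((k₁ / d₁ : ℕ) : ℤ) * x₁ := by
      obtain ⟨c, hc⟩ := h2
      exact ⟨c + y₁, by push_cast [hc] at heq ⊢; linarith⟩
    have hcop' : Nat.Coprime (k₁ / d₁) (n / d₁) :=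
      (Nat.coprime_div_gcd_div_gcd hd1pos).symm
    have hic : IsCoprime ((n / d₁ : ℕ) : ℤ) ((k₁ / d₁ : ℕ) : ℤ) := by
      rw [Int.isCoprime_iff_gcd_eq_one]
      exact_mod_cast hcop'.symm
    have h4 : ((n / d₁ : ℕ) : ℤ) ∣ x₁ := hic.dvd_of_dvd_mul_left h3
    have h5 : |x₁| < ((n / d₁ : ℕ) : ℤ) := by
      rw [abs_of_nonneg hx₁]; omega
    exact Int.eq_zero_of_abs_lt_dvd h4 h5
end

section
/- Let n be an even integer, and let k₁, k₂ be integers with 1 ≤ k₁, k₂ ≤ n/2, d₁ = gcd(n,k₁), d₂ = gcd(n,k₂), and suppose 1 < d₁ < d₂ = n/2 (so k₂ = n/2). Set n₁ = n/d₁ and suppose n₁ is odd. Then gcd(d₁, d₂) = d₁/2, the circulant graph C(ℤ_n, {k₁, k₂}) has exactly d₁/2 connected components, these components are pairwise isomorphic, and each component is isomorphic to the Cartesian product K₂ □ C_{n₁} of the complete graph K₂ with the cycle of length n₁. -/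
open SimpleGraph

def fmap (n n₁ k₁ k₂ : ℕ) (x : ZMod n) (p : Fin 2 × ZMod n₁) : ZMod n :=
  x + ((p.1.val * k₂ + p.2.val * k₁ : ℕ) : ZMod n)

lemma circAdj (n a b : ℕ) (i j : ZMod n) :
    (circulant n {(a : ℤ), (b : ℤ)}).Adj i j ↔ i ≠ j ∧
      (i - j = (a : ZMod n) ∨ i - j = (b : ZMod n) ∨ j - i = (a : ZMod n) ∨ j - i = (b : ZMod n)) := by
  simp only [circulant, fromRel_adj, Set.mem_insert_iff, Set.mem_singleton_iff]
  constructor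
  · rintro ⟨hne, (⟨s, (rfl|rfl), hs⟩|⟨s, (rfl|rfl), hs⟩)⟩ <;>
      refine ⟨hne, ?_⟩ <;> push_cast at hs <;> tauto
  · rintro ⟨hne, (h|h|h|h)⟩ <;> refine ⟨hne, ?_⟩
    · exact Or.inl ⟨a, Or.inl rfl, by push_cast; exact h⟩
    · exact Or.inl ⟨b, Or.inr rfl, by push_cast; exact h⟩
    · exact Or.inr ⟨a, Or.inl rfl, by push_cast; exact h⟩
    · exact Or.inr ⟨b, Or.inr rfl, by push_cast; exact h⟩

lemma cycAdj (n₁ : ℕ) (i j : ZMod n₁) :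
    (circulant n₁ {1}).Adj i j ↔ i ≠ j ∧ (i - j = 1 ∨ j - i = 1) := by
  simp only [circulant, fromRel_adj, Set.mem_singleton_iff]
  constructor
  · rintro ⟨hne, (⟨s, rfl, hs⟩|⟨s, rfl, hs⟩)⟩ <;> refine ⟨hne, ?_⟩ <;> push_cast at hs <;> tauto
  · rintro ⟨hne, (h|h)⟩ <;> refine ⟨hne, ?_⟩
    · exact Or.inl ⟨1, rfl, by push_cast; exact h⟩
    · exact Or.inr ⟨1, rfl, by push_cast; exact h⟩

section arith
variable {n m n₁ k₁ k₂ : ℕ}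

lemma zk (hn : n = 2*m*n₁) (hdvd : 2*m ∣ k₁) (a : ℕ) :
    ((a % n₁ * k₁ : ℕ) : ZMod n) = ((a * k₁ : ℕ) : ZMod n) := by
  obtain ⟨q, hq⟩ := hdvd
  have h1 : n ∣ n₁ * k₁ := ⟨q, by rw [hq, hn]; ring⟩
  have h2 : a % n₁ * k₁ ≡ a * k₁ [MOD n₁ * k₁] := (Nat.mod_modEq a n₁).mul_right' (c := k₁)
  exact (ZMod.natCast_eq_natCast_iff _ _ _).2 (h2.of_dvd h1)

lemma S1 (hn : n = 2*m*n₁) (hdvd : 2*m ∣ k₁) (h3 : 3 ≤ n₁)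
    (x : ZMod n) (ε : Fin 2) (t : ZMod n₁) :
    fmap n n₁ k₁ k₂ x (ε, t + 1) = fmap n n₁ k₁ k₂ x (ε, t) + (k₁ : ZMod n) := by
  haveI : NeZero n₁ := ⟨by omega⟩
  haveI : Fact (1 < n₁) := ⟨by omega⟩
  have hv : (t + 1).val = (t.val + 1) % n₁ := by
    rw [ZMod.val_add, ZMod.val_one]
  simp only [fmap, hv]
  rw [show ((ε.val * k₂ + (t.val + 1) % n₁ * k₁ : ℕ) : ZMod n)
      = (ε.val * k₂ : ℕ) + ((t.val + 1) % n₁ * k₁ : ℕ) by push_cast; ring,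
    zk hn hdvd (t.val + 1)]
  push_cast
  ring

lemma S2 (hn2 : n = 2*k₂) (x : ZMod n) (ε : Fin 2) (t : ZMod n₁) :
    fmap n n₁ k₁ k₂ x (1 - ε, t) = fmap n n₁ k₁ k₂ x (ε, t) + (k₂ : ZMod n) := by
  have hz : ((2 * k₂ : ℕ) : ZMod n) = 0 := by rw [← hn2]; exact ZMod.natCast_self n
  push_cast at hz
  simp only [fmap]
  fin_cases ε <;> norm_num <;> push_cast <;>
    [linear_combination (0:ZMod n); linear_combination -hz]

end arith

section inj
variable {n m n₁ k₁ k₂ : ℕ}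

lemma lemA (hn : n = 2*m*n₁) (hg : Nat.gcd n k₁ = 2*m) (hm : 0 < m) (h3 : 3 ≤ n₁)
    (hk₁ : 0 < k₁) {a b : ℕ} (ha : a < n₁) (hb : b < n₁)
    (h : a * k₁ ≡ b * k₁ [MOD n]) : a = b := by
  have hnpos : 0 < n := by rw [hn]; positivity
  have h2 := Nat.ModEq.cancel_right_div_gcd hnpos h
  rw [hg, hn] at h2
  have hq : 2 * m * n₁ / (2 * m) = n₁ := by
    rw [Nat.mul_div_cancel_left _ (by omega)]
  rw [hq] at h2
  exact h2.eq_of_lt_of_lt ha hb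

lemma lemB (hn : n = 2*m*n₁) (hk2 : k₂ = m*n₁) (hdvd : 2*m ∣ k₁) (hm : 0 < m)
    (hodd : Odd n₁) {a b : ℕ} (h : a * k₁ ≡ k₂ + b * k₁ [MOD n]) : False := by
  have hd : (2*m : ℕ) ∣ n := ⟨n₁, hn⟩
  have h2 : a * k₁ ≡ k₂ + b * k₁ [MOD 2*m] := h.of_dvd hd
  have hak : a * k₁ ≡ 0 [MOD 2*m] := (Nat.modEq_zero_iff_dvd).2 (hdvd.mul_left a)
  have hbk : b * k₁ ≡ 0 [MOD 2*m] := (Nat.modEq_zero_iff_dvd).2 (hdvd.mul_left b)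
  have hk : (0:ℕ) ≡ k₂ [MOD 2*m] := by
    calc (0:ℕ) ≡ a * k₁ [MOD 2*m] := hak.symm
    _ ≡ k₂ + b * k₁ [MOD 2*m] := h2
    _ ≡ k₂ + 0 [MOD 2*m] := Nat.ModEq.add_left k₂ hbk
    _ = k₂ := by omega
  have hdk : (2*m : ℕ) ∣ k₂ := (Nat.modEq_zero_iff_dvd).1 hk.symm
  obtain ⟨c, hc⟩ := hdk
  obtain ⟨r, hr⟩ := hodd
  rw [hk2] at hc
  have : n₁ = 2 * c :=
    Nat.eq_of_mul_eq_mul_left hm (by rw [hc]; ring)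
  omega

lemma fmap_inj (hn : n = 2*m*n₁) (hk2 : k₂ = m*n₁) (hg : Nat.gcd n k₁ = 2*m)
    (hdvd : 2*m ∣ k₁) (hm : 0 < m) (h3 : 3 ≤ n₁) (hodd : Odd n₁) (hk₁ : 0 < k₁)
    (x : ZMod n) : Function.Injective (fmap n n₁ k₁ k₂ x) := by
  haveI : NeZero n₁ := ⟨by omega⟩
  rintro ⟨ε, t⟩ ⟨ε', t'⟩ h
  simp only [fmap, add_right_inj] at h
  have hmod : ε.val * k₂ + t.val * k₁ ≡ ε'.val * k₂ + t'.val * k₁ [MOD n] :=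
    (ZMod.natCast_eq_natCast_iff _ _ _).1 h
  have ht : t.val < n₁ := t.val_lt
  have ht' : t'.val < n₁ := t'.val_lt
  have key : ε = ε' ∧ t.val = t'.val := by
    fin_cases ε <;> fin_cases ε' <;> norm_num at hmod ⊢
    · exact lemA hn hg hm h3 hk₁ ht ht' hmod
    · exact absurd hmod (fun hh => lemB hn hk2 hdvd hm hodd hh)
    · exact absurd hmod.symm (fun hh => lemB hn hk2 hdvd hm hodd hh)
    · exact lemA hn hg hm h3 hk₁ ht ht' (hmod.add_left_cancel' k₂)
  exact Prod.ext key.1 (ZMod.val_injective n₁ key.2)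

end inj

section adj
variable {n m n₁ k₁ k₂ : ℕ}

lemma kne {k : ℕ} (hk : 0 < k) (hkn : k < n) : (k : ZMod n) ≠ 0 := by
  haveI : NeZero n := ⟨by omega⟩
  intro h
  have := (ZMod.natCast_eq_zero_iff k n).1 h
  have := Nat.le_of_dvd hk this
  omega

lemma one_ne_zmod (h3 : 3 ≤ n₁) : (1 : ZMod n₁) ≠ 0 := by
  have : ((1:ℕ) : ZMod n₁) ≠ 0 := kne (by omega) (by omega)
  simpa using this

lemma adjIff (hn : n = 2*m*n₁) (hn2 : n = 2*k₂) (hk2 : k₂ = m*n₁) (hg : Nat.gcd n k₁ = 2*m)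
    (hdvd : 2*m ∣ k₁) (hm : 0 < m) (h3 : 3 ≤ n₁) (hodd : Odd n₁)
    (hk₁ : 0 < k₁) (hk₁n : k₁ < n)
    (x : ZMod n) (p q : Fin 2 × ZMod n₁) :
    (circulant n {(k₁:ℤ), (k₂:ℤ)}).Adj (fmap n n₁ k₁ k₂ x p) (fmap n n₁ k₁ k₂ x q) ↔
      ((⊤ : SimpleGraph (Fin 2)) □ (circulant n₁ {1})).Adj p q := by
  have inj := fmap_inj hn hk2 hg hdvd hm h3 hodd hk₁ x
  have hone := one_ne_zmod h3
  have hk₂pos : 0 < k₂ := by rw [hk2]; positivity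
  have hk₂n : k₂ < n := by omega
  rw [circAdj, boxProd_adj]
  constructor
  · rintro ⟨hne, (h|h|h|h)⟩
    · have hp : fmap n n₁ k₁ k₂ x p = fmap n n₁ k₁ k₂ x (q.1, q.2 + 1) := by
        rw [S1 hn hdvd h3]; exact sub_eq_iff_eq_add'.mp h
      have hpq := inj hp
      right
      rw [cycAdj]
      refine ⟨⟨?_, Or.inl ?_⟩, by rw [hpq]⟩
      · rw [hpq]; simp only []
        intro hh
        exact hone (by linear_combination (hh : q.2 + 1 = q.2))
      · rw [hpq]; ring
    · have hp : fmap n n₁ k₁ k₂ x p = fmap n n₁ k₁ k₂ x (1 - q.1, q.2) := by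
        rw [S2 hn2]; exact sub_eq_iff_eq_add'.mp h
      have hpq := inj hp
      left
      rw [top_adj]
      refine ⟨?_, by rw [hpq]⟩
      rw [hpq]
      exact (by decide : ∀ a : Fin 2, 1 - a ≠ a) q.1
    · have hp : fmap n n₁ k₁ k₂ x q = fmap n n₁ k₁ k₂ x (p.1, p.2 + 1) := by
        rw [S1 hn hdvd h3]; exact sub_eq_iff_eq_add'.mp h
      have hpq := inj hp
      right
      rw [cycAdj]
      refine ⟨⟨?_, Or.inr ?_⟩, by rw [hpq]⟩
      · rw [hpq]
        intro hh
        exact hone (by linear_combination -(hh : p.2 = p.2 + 1))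
      · rw [hpq]; ring
    · have hp : fmap n n₁ k₁ k₂ x q = fmap n n₁ k₁ k₂ x (1 - p.1, p.2) := by
        rw [S2 hn2]; exact sub_eq_iff_eq_add'.mp h
      have hpq := inj hp
      left
      rw [top_adj]
      refine ⟨?_, by rw [hpq]⟩
      rw [hpq]
      exact fun hh => (by decide : ∀ a : Fin 2, 1 - a ≠ a) p.1 hh.symm
  · rintro (⟨ht, he⟩ | ⟨hc, he⟩)
    · rw [top_adj] at ht
      have hp1 : p.1 = 1 - q.1 := (by decide : ∀ a b : Fin 2, a ≠ b → a = 1 - b) p.1 q.1 ht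
      have hp : p = (1 - q.1, q.2) := Prod.ext hp1 he
      have hfp : fmap n n₁ k₁ k₂ x p = fmap n n₁ k₁ k₂ x q + (k₂ : ZMod n) := by
        rw [hp, S2 hn2]
      refine ⟨?_, Or.inr (Or.inl (by rw [hfp]; ring))⟩
      intro hh
      exact ht (congrArg Prod.fst (inj hh))
    · rw [cycAdj] at hc
      obtain ⟨hne2, h1 | h1⟩ := hc
      · have hp : p = (q.1, q.2 + 1) := Prod.ext he (sub_eq_iff_eq_add'.mp h1)
        have hfp : fmap n n₁ k₁ k₂ x p = fmap n n₁ k₁ k₂ x q + (k₁ : ZMod n) := by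
          rw [hp, S1 hn hdvd h3]
        refine ⟨?_, Or.inl (by rw [hfp]; ring)⟩
        intro hh
        exact hne2 (congrArg Prod.snd (inj hh))
      · have hp : q = (p.1, p.2 + 1) := Prod.ext he.symm (sub_eq_iff_eq_add'.mp h1)
        have hfp : fmap n n₁ k₁ k₂ x q = fmap n n₁ k₁ k₂ x p + (k₁ : ZMod n) := by
          rw [hp, S1 hn hdvd h3]
        refine ⟨?_, Or.inr (Or.inr (Or.inl (by rw [hfp]; ring)))⟩
        intro hh
        exact hne2 (congrArg Prod.snd (inj hh))

end adj

section reach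
variable {n m n₁ k₁ k₂ : ℕ}

lemma walk_closed {V : Type*} {G : SimpleGraph V} {S : Set V}
    (hS : ∀ y z, G.Adj y z → y ∈ S → z ∈ S) :
    ∀ u v : V, G.Walk u v → u ∈ S → v ∈ S := by
  intro u v w
  induction w with
  | nil => exact id
  | cons h _ ih => exact fun hu => ih (hS _ _ h hu)

lemma reach_fmap (hn : n = 2*m*n₁) (hn2 : n = 2*k₂) (hk2 : k₂ = m*n₁)
    (hdvd : 2*m ∣ k₁) (hm : 0 < m) (h3 : 3 ≤ n₁)
    (hk₁ : 0 < k₁) (hk₁n : k₁ < n)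
    (x : ZMod n) (p : Fin 2 × ZMod n₁) :
    (circulant n {(k₁:ℤ), (k₂:ℤ)}).Reachable x (fmap n n₁ k₁ k₂ x p) := by
  have hk₂pos : 0 < k₂ := by rw [hk2]; positivity
  have hk₂n : k₂ < n := by omega
  have hstep1 : ∀ y : ZMod n, (circulant n {(k₁:ℤ), (k₂:ℤ)}).Adj y (y + (k₁ : ZMod n)) := by
    intro y
    rw [circAdj]
    refine ⟨fun hh => kne hk₁ hk₁n (by linear_combination -hh), Or.inr (Or.inr (Or.inl (by ring)))⟩
  have hstep2 : ∀ y : ZMod n, (circulant n {(k₁:ℤ), (k₂:ℤ)}).Adj y (y + (k₂ : ZMod n)) := by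
    intro y
    rw [circAdj]
    refine ⟨fun hh => kne hk₂pos hk₂n (by linear_combination -hh), Or.inr (Or.inr (Or.inr (by ring)))⟩
  have main : ∀ a : ℕ, (circulant n {(k₁:ℤ), (k₂:ℤ)}).Reachable x (x + ((a * k₁ : ℕ) : ZMod n)) := by
    intro a
    induction a with
    | zero => simpa using Reachable.refl x
    | succ a ih =>
        refine ih.trans (Adj.reachable ?_)
        have h2 : (x + ((a * k₁ : ℕ) : ZMod n)) + (k₁ : ZMod n)
            = x + (((a+1) * k₁ : ℕ) : ZMod n) := by push_cast; ring
        exact h2 ▸ hstep1 _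
  obtain ⟨ε, t⟩ := p
  fin_cases ε
  · have h2 : fmap n n₁ k₁ k₂ x ((0 : Fin 2), t) = x + ((t.val * k₁ : ℕ) : ZMod n) := by
      simp only [fmap]
      norm_num
    show (circulant n {(k₁:ℤ), (k₂:ℤ)}).Reachable x (fmap n n₁ k₁ k₂ x ((0 : Fin 2), t))
    rw [h2]
    exact main t.val
  · have h2 : fmap n n₁ k₁ k₂ x ((1 : Fin 2), t)
        = (x + ((t.val * k₁ : ℕ) : ZMod n)) + (k₂ : ZMod n) := by
      simp only [fmap]
      norm_num
      push_cast
      ring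
    show (circulant n {(k₁:ℤ), (k₂:ℤ)}).Reachable x (fmap n n₁ k₁ k₂ x ((1 : Fin 2), t))
    rw [h2]
    exact (main t.val).trans (Adj.reachable (hstep2 _))

end reach

section supp
variable {n m n₁ k₁ k₂ : ℕ}

lemma range_closed (hn : n = 2*m*n₁) (hn2 : n = 2*k₂) (hk2 : k₂ = m*n₁)
    (hdvd : 2*m ∣ k₁) (hm : 0 < m) (h3 : 3 ≤ n₁) (x : ZMod n) :
    ∀ y z : ZMod n, (circulant n {(k₁:ℤ), (k₂:ℤ)}).Adj y z →
      y ∈ Set.range (fmap n n₁ k₁ k₂ x) → z ∈ Set.range (fmap n n₁ k₁ k₂ x) := by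
  have h2k : ((2*k₂ : ℕ) : ZMod n) = 0 := by rw [← hn2]; exact ZMod.natCast_self n
  push_cast at h2k
  rintro y z hadj ⟨⟨ε, t⟩, rfl⟩
  rw [circAdj] at hadj
  obtain ⟨hne, h|h|h|h⟩ := hadj
  · refine ⟨(ε, t - 1), ?_⟩
    have hS := S1 (k₂ := k₂) hn hdvd h3 x ε (t - 1)
    rw [sub_add_cancel] at hS
    linear_combination h - hS
  · refine ⟨(1 - ε, t), ?_⟩
    have hS := S2 (n₁ := n₁) (k₁ := k₁) hn2 x ε t
    linear_combination hS + h + h2k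
  · exact ⟨(ε, t + 1), by linear_combination S1 (k₂ := k₂) hn hdvd h3 x ε t - h⟩
  · exact ⟨(1 - ε, t), by linear_combination S2 (n₁ := n₁) (k₁ := k₁) hn2 x ε t - h⟩

lemma range_eq_supp (hn : n = 2*m*n₁) (hn2 : n = 2*k₂) (hk2 : k₂ = m*n₁)
    (hg : Nat.gcd n k₁ = 2*m)
    (hdvd : 2*m ∣ k₁) (hm : 0 < m) (h3 : 3 ≤ n₁) (hodd : Odd n₁)
    (hk₁ : 0 < k₁) (hk₁n : k₁ < n) (x : ZMod n) :
    Set.range (fmap n n₁ k₁ k₂ x)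
      = ((circulant n {(k₁:ℤ), (k₂:ℤ)}).connectedComponentMk x).supp := by
  haveI : NeZero n₁ := ⟨by omega⟩
  apply Set.Subset.antisymm
  · rintro _ ⟨p, rfl⟩
    rw [ConnectedComponent.mem_supp_iff]
    exact ConnectedComponent.sound (reach_fmap hn hn2 hk2 hdvd hm h3 hk₁ hk₁n x p).symm
  · intro y hy
    rw [ConnectedComponent.mem_supp_iff] at hy
    obtain ⟨w⟩ := (ConnectedComponent.exact hy).symm
    refine walk_closed (range_closed hn hn2 hk2 hdvd hm h3 x) x y w ⟨((0 : Fin 2), (0 : ZMod n₁)), ?_⟩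
    simp [fmap, ZMod.val_zero]

end supp

/-- `n` even, `1 < d₁ < d₂ = n/2`, `n₁ = n/d₁` odd: then
`gcd(d₁,d₂) = d₁/2`, there are exactly `d₁/2` pairwise-isomorphic connected components,
each isomorphic to `K₂ □ C_{n₁}`. -/
theorem stmt10 (n k₁ k₂ n₁ : ℕ) (hne : Even n) (h₁ : 1 ≤ k₁) (h₁' : 2 * k₁ ≤ n)
    (h₂ : 1 ≤ k₂) (h₂' : 2 * k₂ ≤ n)
    (hd₁ : 1 < Nat.gcd n k₁) (hdd : Nat.gcd n k₁ < Nat.gcd n k₂)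
    (hd₂ : 2 * Nat.gcd n k₂ = n)
    (hn₁ : n₁ = n / Nat.gcd n k₁) (hodd : Odd n₁) :
    Nat.gcd (Nat.gcd n k₁) (Nat.gcd n k₂) = Nat.gcd n k₁ / 2 ∧
    Nat.card (circulant n {(k₁ : ℤ), (k₂ : ℤ)}).ConnectedComponent = Nat.gcd n k₁ / 2 ∧
    (∀ c c' : (circulant n {(k₁ : ℤ), (k₂ : ℤ)}).ConnectedComponent,
      Nonempty ((circulant n {(k₁ : ℤ), (k₂ : ℤ)}).induce c.supp ≃g (circulant n {(k₁ : ℤ), (k₂ : ℤ)}).induce c'.supp)) ∧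
    (∀ c : (circulant n {(k₁ : ℤ), (k₂ : ℤ)}).ConnectedComponent,
      Nonempty ((circulant n {(k₁ : ℤ), (k₂ : ℤ)}).induce c.supp ≃g
        SimpleGraph.boxProd (⊤ : SimpleGraph (Fin 2)) (circulant n₁ {1}))) := by
  classical
  have hgk₂ : Nat.gcd n k₂ = k₂ := by
    have h1 : Nat.gcd n k₂ ∣ k₂ := Nat.gcd_dvd_right n k₂
    have h2 : Nat.gcd n k₂ ≤ k₂ := Nat.le_of_dvd (by omega) h1
    omega
  have hn2 : n = 2 * k₂ := by omega
  have hd₁n : Nat.gcd n k₁ ∣ n := Nat.gcd_dvd_left n k₁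
  have hd₁k : Nat.gcd n k₁ ∣ k₁ := Nat.gcd_dvd_right n k₁
  have hnd : n = Nat.gcd n k₁ * n₁ := by
    rw [hn₁, Nat.mul_div_cancel' hd₁n]
  have h2d : 2 ∣ Nat.gcd n k₁ := by
    have hcop : Nat.Coprime 2 n₁ := Nat.coprime_two_left.2 hodd
    exact hcop.dvd_of_dvd_mul_right (by rw [← hnd]; exact hne.two_dvd)
  obtain ⟨m, hm2⟩ := h2d
  have hm : 0 < m := by omega
  have hn' : n = 2 * m * n₁ := by rw [hnd, hm2]
  have hk2' : k₂ = m * n₁ := by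
    refine Nat.eq_of_mul_eq_mul_left (show 0 < 2 by norm_num) ?_
    rw [← hn2, hn']; ring
  have h3 : 3 ≤ n₁ := by
    have hlt : m * 2 < m * n₁ := by
      have : 2 * m < m * n₁ := by rw [← hm2, ← hk2', ← hgk₂]; exact hdd
      omega
    have h2 : 2 < n₁ := Nat.lt_of_mul_lt_mul_left hlt
    obtain ⟨r, hr⟩ := hodd
    omega
  have hk₁n : k₁ < n := by omega
  have hdvd : 2 * m ∣ k₁ := hm2 ▸ hd₁k
  have hg : Nat.gcd n k₁ = 2 * m := hm2
  have hk₁pos : 0 < k₁ := h₁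
  -- Part 1
  have part1 : Nat.gcd (Nat.gcd n k₁) (Nat.gcd n k₂) = Nat.gcd n k₁ / 2 := by
    rw [hg, hgk₂, hk2']
    rw [show 2 * m = m * 2 by ring, Nat.gcd_mul_left]
    have hc : Nat.gcd 2 n₁ = 1 := Nat.coprime_two_left.2 hodd
    rw [hc, mul_one]
    omega
  -- component equivalences
  haveI : NeZero n := ⟨by omega⟩
  haveI : NeZero n₁ := ⟨by omega⟩
  have comp : ∀ c : (circulant n {(k₁ : ℤ), (k₂ : ℤ)}).ConnectedComponent,
      Nonempty ((circulant n {(k₁ : ℤ), (k₂ : ℤ)}).induce c.supp ≃g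
        SimpleGraph.boxProd (⊤ : SimpleGraph (Fin 2)) (circulant n₁ {1})) ∧
      Nat.card c.supp = 2 * n₁ := by
    intro c
    obtain ⟨x, hx⟩ := c.exists_rep
    have hx' : (circulant n {(k₁ : ℤ), (k₂ : ℤ)}).connectedComponentMk x = c := hx
    have hrange := range_eq_supp hn' hn2 hk2' hg hdvd hm h3 hodd hk₁pos hk₁n x
    rw [hx'] at hrange
    have hinj := fmap_inj hn' hk2' hg hdvd hm h3 hodd hk₁pos x
    let e : (Fin 2 × ZMod n₁) ≃ c.supp :=
      Equiv.ofBijective (fun p => ⟨fmap n n₁ k₁ k₂ x p, by rw [← hrange]; exact ⟨p, rfl⟩⟩)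
        ⟨fun p q h => hinj (congrArg Subtype.val h), by
          rintro ⟨y, hy⟩
          rw [← hrange] at hy
          obtain ⟨p, hp⟩ := hy
          exact ⟨p, Subtype.ext hp⟩⟩
    constructor
    · refine ⟨⟨e.symm, ?_⟩⟩
      intro a b
      have ha : fmap n n₁ k₁ k₂ x (e.symm a) = (a : ZMod n) :=
        congrArg Subtype.val (e.apply_symm_apply a)
      have hb : fmap n n₁ k₁ k₂ x (e.symm b) = (b : ZMod n) :=
        congrArg Subtype.val (e.apply_symm_apply b)
      rw [← adjIff hn' hn2 hk2' hg hdvd hm h3 hodd hk₁pos hk₁n x (e.symm a) (e.symm b), ha, hb]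
      exact Iff.rfl
    · have := Nat.card_congr e
      rw [Nat.card_eq_fintype_card, Fintype.card_prod, ZMod.card, Fintype.card_fin] at this
      omega
  -- Part 2 : counting
  haveI : Fintype ((circulant n {(k₁ : ℤ), (k₂ : ℤ)}).ConnectedComponent) := Fintype.ofFinite _
  have part2 : Nat.card (circulant n {(k₁ : ℤ), (k₂ : ℤ)}).ConnectedComponent = Nat.gcd n k₁ / 2 := by
    have h1 : Fintype.card (ZMod n) = n := ZMod.card n
    have h2 := Fintype.card_congr
      (Equiv.sigmaFiberEquiv ((circulant n {(k₁ : ℤ), (k₂ : ℤ)}).connectedComponentMk)).symm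
    rw [Fintype.card_sigma] at h2
    have h3 : ∀ c : (circulant n {(k₁ : ℤ), (k₂ : ℤ)}).ConnectedComponent,
        Fintype.card {x // (circulant n {(k₁ : ℤ), (k₂ : ℤ)}).connectedComponentMk x = c} = 2 * n₁ := by
      intro c
      rw [← Nat.card_eq_fintype_card]
      calc Nat.card {x // (circulant n {(k₁ : ℤ), (k₂ : ℤ)}).connectedComponentMk x = c}
          = Nat.card c.supp := Nat.card_congr
            (Equiv.subtypeEquivRight (fun v => (ConnectedComponent.mem_supp_iff c v).symm))
        _ = 2 * n₁ := (comp c).2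
    simp_rw [h3] at h2
    rw [Finset.sum_const, smul_eq_mul, Finset.card_univ, h1] at h2
    have hcard : Fintype.card ((circulant n {(k₁ : ℤ), (k₂ : ℤ)}).ConnectedComponent) = m := by
      refine Nat.eq_of_mul_eq_mul_right (show 0 < 2 * n₁ by omega) ?_
      rw [← h2, hn']; ring
    rw [Nat.card_eq_fintype_card, hcard, hg]
    omega
  refine ⟨part1, part2, ?_, fun c => (comp c).1⟩
  intro c c'
  exact ⟨((comp c).1.some).trans ((comp c').1.some).symm⟩
end

section
/- Let n be an even integer, and let k₁, k₂ be integers with 1 ≤ k₁, k₂ ≤ n/2, d₁ = gcd(n,k₁), d₂ = gcd(n,k₂), and suppose 1 < d₁ < d₂ = n/2 (so k₂ = n/2). Set n₁ = n/d₁ and suppose n₁ is even. Then gcd(d₁, d₂) = d₁, the circulant graph C(ℤ_n, {k₁, k₂}) has exactly d₁ connected components, these components are pairwise isomorphic, and each component is isomorphic to the circulant graph C(ℤ_{n₁}, {1, n₁/2}). -/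
open SimpleGraph

/-!
Vertices `u, v` of `C(ℤ_n, S)` are connected iff `u - v` lies in the subgroup `H` generated by
`S`, so the components are the cosets of `H` and translation carries each of them onto `H`.
Here `k₂ = n/2`, and since `k₁ / d₁` is coprime to the even number `n₁` it is odd, so
`(n₁/2) • k₁ = k₂` in `ℤ_n`. As `k₁` has order `n₁`, `t ↦ t • k₁` is an isomorphism
`ℤ_{n₁} → H = ⟨k₁⟩` carrying `{±1, ±n₁/2}` onto `{±k₁, ±k₂}`; it is therefore a graph
isomorphism `C(ℤ_{n₁}, {1, n₁/2}) ≅ H`, and there are `n / n₁ = d₁` cosets.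
-/

open Function

section Circulant

variable {n : ℕ} {S : Set ℤ}

theorem circulant_adj_iff {u v : ZMod n} :
    (circulant n S).Adj u v ↔ u ≠ v ∧ (u - v ∈ Int.cast '' S ∨ v - u ∈ Int.cast '' S) := by
  simp only [circulant, fromRel_adj, Set.mem_image, eq_comm]

theorem circulant_adj_add_left_iff {a u v : ZMod n} :
    (circulant n S).Adj (a + u) (a + v) ↔ (circulant n S).Adj u v := by
  simp only [circulant_adj_iff, add_sub_add_left_eq_sub, ne_eq, add_right_inj]

theorem circulant_reachable_add_of_mem_closure {x : ZMod n}
    (hx : x ∈ AddSubgroup.closure (Int.cast '' S)) :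
    ∀ v, (circulant n S).Reachable v (v + x) := by
  induction hx using AddSubgroup.closure_induction with
  | mem x hx =>
    intro v
    by_cases hx0 : x = 0
    · simp [hx0]
    · exact (circulant_adj_iff.2 ⟨by simpa using hx0, Or.inr (by simpa using hx)⟩).reachable
  | zero => simp
  | add x y _ _ ihx ihy => exact fun v => (ihx v).trans (by simpa [add_assoc] using ihy (v + x))
  | neg x _ ih => exact fun v => by simpa using (ih (v + -x)).symm

theorem circulant_reachable_iff {u v : ZMod n} :
    (circulant n S).Reachable u v ↔ u - v ∈ AddSubgroup.closure (Int.cast '' S) := by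
  refine ⟨?_, fun h => by simpa using (circulant_reachable_add_of_mem_closure h v).symm⟩
  rintro ⟨p⟩
  induction p with
  | nil => simp
  | @cons a b c hadj _ ih =>
    have hab : a - b ∈ AddSubgroup.closure (Int.cast '' S) := by
      rcases (circulant_adj_iff.1 hadj).2 with h | h
      · exact AddSubgroup.subset_closure h
      · simpa using neg_mem (AddSubgroup.subset_closure h)
    simpa using add_mem hab ih

theorem card_connectedComponent_circulant :
    Nat.card (circulant n S).ConnectedComponent =
      (AddSubgroup.closure (Int.cast '' S : Set (ZMod n))).index :=
  Nat.card_congr <| Quot.congr (Equiv.refl _) fun u v => by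
    rw [circulant_reachable_iff, ← AddSubgroup.neg_mem_iff, neg_sub, sub_eq_neg_add]
    exact QuotientAddGroup.leftRel_apply.symm

end Circulant

theorem AddMonoidHom.range_eq_closure_image {G H : Type*} [AddGroup G] [AddGroup H] (f : G →+ H)
    {s : Set G} (hs : AddSubgroup.closure s = ⊤) : f.range = AddSubgroup.closure (f '' s) := by
  rw [← AddMonoidHom.map_closure, hs, AddMonoidHom.range_eq_map]

section Embedding

variable {m n : ℕ} {S T : Set ℤ} {g : ZMod m →+ ZMod n}

theorem circulant_adj_map_iff (hg : Injective g)
    (hST : (Int.cast '' S : Set (ZMod n)) = g '' (Int.cast '' T)) (t t' : ZMod m) :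
    (circulant n S).Adj (g t) (g t') ↔ (circulant m T).Adj t t' := by
  simp only [circulant_adj_iff, hST, ← map_sub, hg.mem_set_image, hg.ne_iff]

theorem card_connectedComponent_circulant_mul (hg : Injective g)
    (hST : (Int.cast '' S : Set (ZMod n)) = g '' (Int.cast '' T))
    (hT : AddSubgroup.closure (Int.cast '' T : Set (ZMod m)) = ⊤) :
    Nat.card (circulant n S).ConnectedComponent * m = n := by
  rw [card_connectedComponent_circulant, hST, ← g.range_eq_closure_image hT]
  calc g.range.index * m = g.range.index * Nat.card (ZMod m) := by rw [Nat.card_zmod]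
    _ = n := by
      rw [Nat.card_congr (AddMonoidHom.ofInjective hg).toEquiv, AddSubgroup.index_mul_card,
        Nat.card_zmod]

theorem nonempty_induce_supp_iso_circulant (hg : Injective g)
    (hST : (Int.cast '' S : Set (ZMod n)) = g '' (Int.cast '' T))
    (hT : AddSubgroup.closure (Int.cast '' T : Set (ZMod m)) = ⊤)
    (c : (circulant n S).ConnectedComponent) :
    Nonempty ((circulant n S).induce c.supp ≃g circulant m T) := by
  induction c using ConnectedComponent.ind with | h a => ?_
  have hsupp (v : ZMod n) :
      v ∈ ((circulant n S).connectedComponentMk a).supp ↔ v - a ∈ g.range := by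
    rw [ConnectedComponent.mem_supp_iff, ConnectedComponent.eq, circulant_reachable_iff, hST,
      g.range_eq_closure_image hT]
  let φ : ZMod m → ((circulant n S).connectedComponentMk a).supp :=
    fun t => ⟨a + g t, (hsupp _).2 (by simp)⟩
  have hφ : Bijective φ := by
    refine ⟨fun t t' h => hg (by simpa [φ] using congrArg Subtype.val h), fun ⟨v, hv⟩ => ?_⟩
    obtain ⟨t, ht⟩ := (hsupp v).1 hv
    exact ⟨t, Subtype.ext (by simp [φ, ht])⟩
  refine ⟨(RelIso.mk (Equiv.ofBijective φ hφ) fun {t t'} => ?_).symm⟩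
  simp only [Equiv.ofBijective_apply, comap_adj, Embedding.coe_subtype, φ]
  rw [circulant_adj_add_left_iff, circulant_adj_map_iff hg hST]

end Embedding

section ZMultiples

variable {A : Type*} [AddGroup A] {m : ℕ} (a : A) (h : addOrderOf a = m)

def zmodZMultiplesHom : ZMod m →+ A :=
  ZMod.lift m ⟨zmultiplesHom A a, by simp [← h, addOrderOf_nsmul_eq_zero]⟩

theorem zmodZMultiplesHom_intCast (z : ℤ) : zmodZMultiplesHom a h z = z • a :=
  ZMod.lift_coe _ _ z

theorem zmodZMultiplesHom_natCast (k : ℕ) : zmodZMultiplesHom a h k = k • a := by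
  simpa using zmodZMultiplesHom_intCast a h k

theorem zmodZMultiplesHom_injective : Injective (zmodZMultiplesHom a h) := by
  refine (injective_iff_map_eq_zero _).2 fun t ht => ?_
  obtain ⟨z, rfl⟩ := ZMod.intCast_surjective t
  rw [zmodZMultiplesHom_intCast, ← addOrderOf_dvd_iff_zsmul_eq_zero, h] at ht
  exact (ZMod.intCast_zmod_eq_zero_iff_dvd z m).2 ht

end ZMultiples

theorem ZMod.closure_intCast_eq_top {m : ℕ} {T : Set ℤ} (h : 1 ∈ T) :
    AddSubgroup.closure (Int.cast '' T : Set (ZMod m)) = ⊤ := by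
  refine (AddSubgroup.eq_top_iff' _).2 fun x => ?_
  obtain ⟨z, rfl⟩ := ZMod.intCast_surjective x
  have h1 : (1 : ZMod m) ∈ (Int.cast '' T : Set (ZMod m)) := ⟨1, h, Int.cast_one⟩
  simpa using zsmul_mem (AddSubgroup.subset_closure h1) z

theorem ZMod.nsmul_natCast_eq_half {n k q : ℕ} (hn : 0 < n) (hq : 2 * q = n / n.gcd k) :
    q • (k : ZMod n) = ((n / 2 : ℕ) : ZMod n) := by
  set d := n.gcd k
  have hcop : Nat.Coprime (2 * q) (k / d) :=
    hq ▸ Nat.coprime_div_gcd_div_gcd (Nat.gcd_pos_of_pos_left k hn)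
  obtain ⟨j, hj⟩ : Odd (k / d) :=
    Nat.coprime_two_left.1 (hcop.coprime_dvd_left (dvd_mul_right 2 q))
  have hk : k = d * (2 * j + 1) := by rw [← hj, Nat.mul_div_cancel' (Nat.gcd_dvd_right n k)]
  have hn : n = d * (2 * q) := by rw [hq, Nat.mul_div_cancel' (Nat.gcd_dvd_left n k)]
  have : q * k = n * j + n / 2 := by
    rw [hk, hn, mul_left_comm d, Nat.mul_div_cancel_left _ two_pos]; ring
  rw [nsmul_eq_mul, ← Nat.cast_mul, this]
  simp

theorem stmt11_general (n k₁ k₂ n₁ : ℕ) (h₂ : 1 ≤ k₂) (h₂' : 2 * k₂ ≤ n)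
    (hd₂ : 2 * Nat.gcd n k₂ = n)
    (hn₁ : n₁ = n / Nat.gcd n k₁) (heven : Even n₁) :
    Nat.gcd (Nat.gcd n k₁) (Nat.gcd n k₂) = Nat.gcd n k₁ ∧
    Nat.card (circulant n {(k₁ : ℤ), (k₂ : ℤ)}).ConnectedComponent = Nat.gcd n k₁ ∧
    (∀ c c' : (circulant n {(k₁ : ℤ), (k₂ : ℤ)}).ConnectedComponent,
      Nonempty ((circulant n {(k₁ : ℤ), (k₂ : ℤ)}).induce c.supp ≃g (circulant n {(k₁ : ℤ), (k₂ : ℤ)}).induce c'.supp)) ∧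
    (∀ c : (circulant n {(k₁ : ℤ), (k₂ : ℤ)}).ConnectedComponent,
      Nonempty ((circulant n {(k₁ : ℤ), (k₂ : ℤ)}).induce c.supp ≃g circulant n₁ {1, ((n₁ / 2 : ℕ) : ℤ)})) := by
  have hn : 0 < n := by have := Nat.gcd_pos_of_pos_right n h₂; omega
  have hk₂ : k₂ = n / 2 := by have := Nat.le_of_dvd h₂ (Nat.gcd_dvd_right n k₂); omega
  have hmul : n₁ * Nat.gcd n k₁ = n := hn₁ ▸ Nat.div_mul_cancel (Nat.gcd_dvd_left n k₁)
  have hord : addOrderOf (k₁ : ZMod n) = n₁ := by rw [ZMod.addOrderOf_coe _ hn.ne', hn₁]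
  have hST : (Int.cast '' {(k₁ : ℤ), (k₂ : ℤ)} : Set (ZMod n)) =
      zmodZMultiplesHom _ hord '' (Int.cast '' {1, ((n₁ / 2 : ℕ) : ℤ)}) := by
    have hg₁ : zmodZMultiplesHom _ hord 1 = (k₁ : ZMod n) := by
      simpa using zmodZMultiplesHom_natCast _ hord 1
    have hg₂ : zmodZMultiplesHom _ hord ((n₁ / 2 : ℕ) : ZMod n₁) = (k₂ : ZMod n) := by
      rw [zmodZMultiplesHom_natCast, hk₂,
        ZMod.nsmul_natCast_eq_half hn (hn₁ ▸ Nat.two_mul_div_two_of_even heven)]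
    simp only [Set.image_pair, Int.cast_one, Int.cast_natCast, hg₁, hg₂]
  have hT := ZMod.closure_intCast_eq_top (m := n₁) (Set.mem_insert 1 {((n₁ / 2 : ℕ) : ℤ)})
  have hinj := zmodZMultiplesHom_injective _ hord
  have hiso := nonempty_induce_supp_iso_circulant hinj hST hT
  refine ⟨Nat.gcd_eq_left ?_, ?_, fun c c' => ?_, hiso⟩
  · obtain ⟨r, rfl⟩ := heven
    exact Dvd.intro r (by linarith)
  · have hn₁pos : 0 < n₁ := Nat.pos_of_mul_pos_right (hmul ▸ hn : 0 < n₁ * _)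
    refine Nat.eq_of_mul_eq_mul_right hn₁pos ?_
    rw [card_connectedComponent_circulant_mul hinj hST hT]
    exact hmul.symm.trans (mul_comm _ _)
  · obtain ⟨e⟩ := hiso c
    obtain ⟨e'⟩ := hiso c'
    exact ⟨e.trans e'.symm⟩

/-- `n` even, `1 < d₁ < d₂ = n/2`, `n₁ = n/d₁` even: then
`gcd(d₁,d₂) = d₁`, there are exactly `d₁` pairwise-isomorphic connected components,
each isomorphic to `C(ℤ_{n₁}, {1, n₁/2})`. -/
theorem stmt11 (n k₁ k₂ n₁ : ℕ) (hne : Even n) (h₁ : 1 ≤ k₁) (h₁' : 2 * k₁ ≤ n)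
    (h₂ : 1 ≤ k₂) (h₂' : 2 * k₂ ≤ n)
    (hd₁ : 1 < Nat.gcd n k₁) (hdd : Nat.gcd n k₁ < Nat.gcd n k₂)
    (hd₂ : 2 * Nat.gcd n k₂ = n)
    (hn₁ : n₁ = n / Nat.gcd n k₁) (heven : Even n₁) :
    Nat.gcd (Nat.gcd n k₁) (Nat.gcd n k₂) = Nat.gcd n k₁ ∧
    Nat.card (circulant n {(k₁ : ℤ), (k₂ : ℤ)}).ConnectedComponent = Nat.gcd n k₁ ∧
    (∀ c c' : (circulant n {(k₁ : ℤ), (k₂ : ℤ)}).ConnectedComponent,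
      Nonempty ((circulant n {(k₁ : ℤ), (k₂ : ℤ)}).induce c.supp ≃g (circulant n {(k₁ : ℤ), (k₂ : ℤ)}).induce c'.supp)) ∧
    (∀ c : (circulant n {(k₁ : ℤ), (k₂ : ℤ)}).ConnectedComponent,
      Nonempty ((circulant n {(k₁ : ℤ), (k₂ : ℤ)}).induce c.supp ≃g circulant n₁ {1, ((n₁ / 2 : ℕ) : ℤ)})) :=
  stmt11_general n k₁ k₂ n₁ h₂ h₂' hd₂ hn₁ heven
end

section
/- Let n be an even integer with n ≥ 4 and let k be an odd integer with 1 ≤ k ≤ n/2. Then mbt(C(n,k)) = Δ(C(n,k)); that is, C(n,k) is dispersable. (Here Δ(C(n,k)) = 3 if k = n/2 and Δ(C(n,k)) = 4 otherwise.) -/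
open SimpleGraph

-- ===================== my development =====================

lemma chordBetween_val {N : ℕ} (x a b : Fin N) :
    ChordBetween x a b ↔ (min a.val b.val < x.val ∧ x.val < max a.val b.val) := by
  unfold ChordBetween
  rcases le_total a b with h | h
  · rw [min_eq_left h, max_eq_right h, min_eq_left (Fin.le_def.mp h),
      max_eq_right (Fin.le_def.mp h)]
    exact and_congr Fin.lt_def Fin.lt_def
  · rw [min_eq_right h, max_eq_left h, min_eq_right (Fin.le_def.mp h),
      max_eq_left (Fin.le_def.mp h)]
    exact and_congr Fin.lt_def Fin.lt_def

/-- chords with equal endpoint-sums mod `N` never cross. -/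
lemma no_cross {N : ℕ} (x₁ y₁ x₂ y₂ : Fin N)
    (h : (x₁.val + y₁.val) % N = (x₂.val + y₂.val) % N) :
    ¬ ChordCross x₁ y₁ x₂ y₂ := by
  intro hc
  rw [ChordCross, chordBetween_val, chordBetween_val] at hc
  have b1 := x₁.isLt; have b2 := y₁.isLt; have b3 := x₂.isLt; have b4 := y₂.isLt
  have key : ∀ a b : Fin N, (a.val + b.val) % N = a.val + b.val ∨
      (a.val + b.val) % N + N = a.val + b.val := by
    intro a b
    rcases Nat.lt_or_ge (a.val + b.val) N with hlt | hge
    · exact Or.inl (Nat.mod_eq_of_lt hlt)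
    · right
      have ha := a.isLt; have hb := b.isLt
      rw [Nat.mod_eq_sub_mod hge, Nat.mod_eq_of_lt (by omega)]
      omega
  have k1 := key x₁ y₁
  have k2 := key x₂ y₂
  rcases le_total x₁.val y₁.val with hle | hle
  · rw [min_eq_left hle, max_eq_right hle] at hc
    rcases hc with ⟨h1, h3⟩ | ⟨h1, h3⟩ <;> omega
  · rw [min_eq_right hle, max_eq_left hle] at hc
    rcases hc with ⟨h1, h3⟩ | ⟨h1, h3⟩ <;> omega

section Main

variable {n k : ℕ}

/-- position map: even vertices stay, odd vertices reflect about 1. -/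
def posmap (n : ℕ) (hd : 2 ∣ n) : ZMod n → ZMod n :=
  fun v => if ZMod.castHom hd (ZMod 2) v = 0 then v else 2 - v

lemma zmod2_cases : ∀ x : ZMod 2, x = 0 ∨ x = 1 := by decide

lemma posmap_invol (hd : 2 ∣ n) : Function.Involutive (posmap n hd) := by
  intro v
  unfold posmap
  have h2 : ZMod.castHom hd (ZMod 2) (2 - v) = ZMod.castHom hd (ZMod 2) v := by
    rw [map_sub]
    have : ZMod.castHom hd (ZMod 2) (2 : ZMod n) = 0 := by
      have : ((2 : ℕ) : ZMod n) = (2 : ZMod n) := by push_cast; ring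
      rw [← this, map_natCast]
      decide
    rw [this]
    rcases zmod2_cases (ZMod.castHom hd (ZMod 2) v) with h | h <;> rw [h] <;> decide
  by_cases h : ZMod.castHom hd (ZMod 2) v = 0
  · simp [h]
  · rw [if_neg h, if_neg (h2 ▸ h), sub_sub_cancel]

/-- the layout: an explicit equiv `ZMod n ≃ Fin (Nat.card (ZMod n))`. -/
noncomputable def layout (n : ℕ) [NeZero n] (hd : 2 ∣ n) : ZMod n ≃ Fin (Nat.card (ZMod n)) :=
  Equiv.ofBijective
    (fun v => ⟨(posmap n hd v).val, by rw [Nat.card_zmod]; exact ZMod.val_lt _⟩)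
    (by
      rw [Fintype.bijective_iff_injective_and_card]
      constructor
      · intro v w hvw
        have h : (posmap n hd v).val = (posmap n hd w).val := congrArg Fin.val hvw
        exact (posmap_invol hd).injective (ZMod.val_injective n h)
      · simp [ZMod.card, Nat.card_zmod])

lemma layout_val [NeZero n] (hd : 2 ∣ n) (v : ZMod n) :
    ((layout n hd v) : ℕ) = (posmap n hd v).val := rfl

lemma circ_adj (a b : ZMod n) :
    (circ n k).Adj a b ↔ a ≠ b ∧
      (b - a = 1 ∨ b - a = (k : ZMod n) ∨ a - b = 1 ∨ a - b = (k : ZMod n)) := by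
  show (SimpleGraph.fromRel _).Adj a b ↔ _
  rw [SimpleGraph.fromRel_adj]
  simp only [Set.mem_insert_iff, Set.mem_singleton_iff]
  constructor
  · rintro ⟨hne, (⟨s, (rfl | rfl), hs⟩ | ⟨s, (rfl | rfl), hs⟩)⟩ <;>
      refine ⟨hne, ?_⟩ <;> push_cast at hs <;> tauto
  · rintro ⟨hne, (h | h | h | h)⟩ <;> refine ⟨hne, ?_⟩
    · exact Or.inr ⟨1, Or.inl rfl, by push_cast; exact h⟩
    · exact Or.inr ⟨k, Or.inr rfl, by push_cast; exact h⟩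
    · exact Or.inl ⟨1, Or.inl rfl, by push_cast; exact h⟩
    · exact Or.inl ⟨k, Or.inr rfl, by push_cast; exact h⟩

lemma par_k (hd : 2 ∣ n) (hko : Odd k) :
    ZMod.castHom hd (ZMod 2) ((k : ℕ) : ZMod n) = 1 := by
  rw [map_natCast]
  obtain ⟨j, hj⟩ := hko
  subst hj
  push_cast
  rw [show ((2 : ZMod 2)) = 0 from by decide]
  ring

lemma sum_aux1 (hd : 2 ∣ n) {a b : ZMod n} (hab : b - a = 1) :
    posmap n hd a + posmap n hd b = 1 ∨ posmap n hd a + posmap n hd b = 3 := by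
  have hb : b = a + 1 := by linear_combination hab
  subst hb
  unfold posmap
  by_cases hpa : ZMod.castHom hd (ZMod 2) a = 0
  · have hpb : ZMod.castHom hd (ZMod 2) (a + 1) ≠ 0 := by
      rw [map_add, map_one, hpa, zero_add]; decide
    rw [if_pos hpa, if_neg hpb]
    left; ring
  · have hpb : ZMod.castHom hd (ZMod 2) (a + 1) = 0 := by
      rw [map_add, map_one]
      rcases zmod2_cases (ZMod.castHom hd (ZMod 2) a) with h | h
      · exact absurd h hpa
      · rw [h]; decide
    rw [if_neg hpa, if_pos hpb]
    right; ring

lemma sum_aux2 (hd : 2 ∣ n) (hko : Odd k) {a b : ZMod n} (hab : b - a = (k : ZMod n)) :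
    posmap n hd a + posmap n hd b = 2 - (k : ZMod n) ∨
      posmap n hd a + posmap n hd b = 2 + (k : ZMod n) := by
  have hb : b = a + (k : ZMod n) := by linear_combination hab
  subst hb
  unfold posmap
  by_cases hpa : ZMod.castHom hd (ZMod 2) a = 0
  · have hpb : ZMod.castHom hd (ZMod 2) (a + (k : ZMod n)) ≠ 0 := by
      rw [map_add, par_k hd hko, hpa, zero_add]; decide
    rw [if_pos hpa, if_neg hpb]
    left; ring
  · have hpb : ZMod.castHom hd (ZMod 2) (a + (k : ZMod n)) = 0 := by
      rw [map_add, par_k hd hko]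
      rcases zmod2_cases (ZMod.castHom hd (ZMod 2) a) with h | h
      · exact absurd h hpa
      · rw [h]; decide
    rw [if_neg hpa, if_pos hpb]
    right; ring

/-- possible values of the endpoint sum of an edge. -/
lemma sum_adj (hd : 2 ∣ n) (hko : Odd k) {a b : ZMod n} (h : (circ n k).Adj a b) :
    posmap n hd a + posmap n hd b ∈ ({1, 3, 2 - (k : ZMod n), 2 + (k : ZMod n)} : Set (ZMod n)) := by
  simp only [Set.mem_insert_iff, Set.mem_singleton_iff]
  rw [circ_adj] at h
  obtain ⟨-, (h | h | h | h)⟩ := h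
  · rcases sum_aux1 hd h with h' | h' <;> tauto
  · rcases sum_aux2 hd hko h with h' | h' <;> tauto
  · rw [add_comm]; rcases sum_aux1 hd h with h' | h' <;> tauto
  · rw [add_comm]; rcases sum_aux2 hd hko h with h' | h' <;> tauto

/-- the main construction: any `f` injective on the sum values gives an MBE. -/
theorem hasMBE_of [NeZero n] (hd : 2 ∣ n) (hko : Odd k) {m : ℕ}
    (f : ZMod n → Fin m)
    (hf : ∀ x ∈ ({1, 3, 2 - (k : ZMod n), 2 + (k : ZMod n)} : Set (ZMod n)),
      ∀ y ∈ ({1, 3, 2 - (k : ZMod n), 2 + (k : ZMod n)} : Set (ZMod n)), f x = f y → x = y) :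
    HasMBE (circ n k) m := by
  refine ⟨layout n hd, fun a b => f (posmap n hd a + posmap n hd b), ?_, ?_, ?_⟩
  · intro u v _
    simp only []
    rw [add_comm]
  · intro u v w huv huw hvw hcol
    have heq := hf _ (sum_adj hd hko huv) _ (sum_adj hd hko huw) hcol
    exact hvw ((posmap_invol hd).injective (by linear_combination heq))
  · intro a b c d hab hcd hcross hcol
    have hsum := hf _ (sum_adj hd hko hab) _ (sum_adj hd hko hcd) hcol
    refine no_cross _ _ _ _ ?_ hcross
    simp only [layout_val, Nat.card_zmod]
    rw [← ZMod.val_add, ← ZMod.val_add, hsum]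

-- ===== arithmetic distinctness facts =====

lemma natCast_inj_small [NeZero n] {a b : ℕ} (ha : a < n) (hb : b < n)
    (h : ((a : ℕ) : ZMod n) = ((b : ℕ) : ZMod n)) : a = b := by
  rw [← ZMod.val_cast_of_lt ha, ← ZMod.val_cast_of_lt hb, h]

lemma cast_k_eq_one [NeZero n] (hn : 4 ≤ n) (hk : 1 ≤ k) (hk' : k ≤ n / 2)
    (h : ((k : ℕ) : ZMod n) = 1) : k = 1 := by
  have h1 : ((k : ℕ) : ZMod n) = ((1 : ℕ) : ZMod n) := by push_cast; exact h
  exact natCast_inj_small (by omega) (by omega) h1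

lemma cast_k_ne_zero (hn : 4 ≤ n) (hk : 1 ≤ k) (hk' : k ≤ n / 2) :
    ((k : ℕ) : ZMod n) ≠ 0 := by
  intro h
  rw [ZMod.natCast_eq_zero_iff] at h
  have := Nat.le_of_dvd (by omega) h
  omega

lemma cast_k_succ_ne_zero (hn : 4 ≤ n) (hk : 1 ≤ k) (hk' : k ≤ n / 2) :
    ((k : ℕ) : ZMod n) + 1 ≠ 0 := by
  intro h
  have h1 : (((k + 1 : ℕ)) : ZMod n) = 0 := by push_cast; linear_combination h
  rw [ZMod.natCast_eq_zero_iff] at h1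
  have := Nat.le_of_dvd (by omega) h1
  omega

lemma two_nz (hn : 4 ≤ n) : (2 : ZMod n) ≠ 0 := by
  intro h
  have h1 : (((2 : ℕ)) : ZMod n) = 0 := by push_cast; exact h
  rw [ZMod.natCast_eq_zero_iff] at h1
  have := Nat.le_of_dvd (by omega) h1
  omega

lemma one_ne_three (hn : 4 ≤ n) : (1 : ZMod n) ≠ 3 := by
  intro h
  have : NeZero n := ⟨by omega⟩
  have h1 : ((1 : ℕ) : ZMod n) = ((3 : ℕ) : ZMod n) := by push_cast; exact h
  have := natCast_inj_small (n := n) (by omega) (by omega) h1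
  omega

lemma two_sub_ne_one (hn : 4 ≤ n) (hk : 1 ≤ k) (hk' : k ≤ n / 2) (hk1 : k ≠ 1) :
    (2 : ZMod n) - (k : ℕ) ≠ 1 := by
  intro h
  have : NeZero n := ⟨by omega⟩
  exact hk1 (cast_k_eq_one hn hk hk' (by linear_combination -h))

lemma two_add_ne_three (hn : 4 ≤ n) (hk : 1 ≤ k) (hk' : k ≤ n / 2) (hk1 : k ≠ 1) :
    (2 : ZMod n) + (k : ℕ) ≠ 3 := by
  intro h
  have : NeZero n := ⟨by omega⟩
  exact hk1 (cast_k_eq_one hn hk hk' (by linear_combination h))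

lemma two_sub_ne_three (hn : 4 ≤ n) (hk : 1 ≤ k) (hk' : k ≤ n / 2) :
    (2 : ZMod n) - (k : ℕ) ≠ 3 := by
  intro h
  exact cast_k_succ_ne_zero hn hk hk' (by linear_combination -h)

lemma two_add_ne_one (hn : 4 ≤ n) (hk : 1 ≤ k) (hk' : k ≤ n / 2) :
    (2 : ZMod n) + (k : ℕ) ≠ 1 := by
  intro h
  exact cast_k_succ_ne_zero hn hk hk' (by linear_combination h)

lemma two_sub_ne_two_add (hn : 4 ≤ n) (hk : 1 ≤ k) (hk' : k ≤ n / 2) (hkn : 2 * k ≠ n) :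
    (2 : ZMod n) - (k : ℕ) ≠ (2 : ZMod n) + (k : ℕ) := by
  intro h
  have h1 : (((2 * k : ℕ)) : ZMod n) = 0 := by push_cast; linear_combination -h
  rw [ZMod.natCast_eq_zero_iff] at h1
  have h2 := Nat.le_of_dvd (by omega) h1
  omega

-- ===== neighbor sets and max degree =====

lemma neighborSet_eq (hn : 4 ≤ n) (hk : 1 ≤ k) (hk' : k ≤ n / 2) (v : ZMod n) :
    (circ n k).neighborSet v =
      {v + 1, v - 1, v + (k : ℕ), v - (k : ℕ)} := by
  have : NeZero n := ⟨by omega⟩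
  ext w
  rw [SimpleGraph.mem_neighborSet, circ_adj]
  simp only [Set.mem_insert_iff, Set.mem_singleton_iff]
  constructor
  · rintro ⟨hne, (h | h | h | h)⟩
    · exact Or.inl (by linear_combination h)
    · exact Or.inr (Or.inr (Or.inl (by linear_combination h)))
    · exact Or.inr (Or.inl (by linear_combination -h))
    · exact Or.inr (Or.inr (Or.inr (by linear_combination -h)))
  · rintro (rfl | rfl | rfl | rfl)
    · refine ⟨fun h => ?_, Or.inl (by ring)⟩
      have : (1 : ZMod n) = 0 := by linear_combination -h
      have h1 : ((1 : ℕ) : ZMod n) = 0 := by push_cast; exact this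
      rw [ZMod.natCast_eq_zero_iff] at h1
      have := Nat.le_of_dvd (by omega) h1
      omega
    · refine ⟨fun h => ?_, Or.inr (Or.inr (Or.inl (by ring)))⟩
      have : (1 : ZMod n) = 0 := by linear_combination h
      have h1 : ((1 : ℕ) : ZMod n) = 0 := by push_cast; exact this
      rw [ZMod.natCast_eq_zero_iff] at h1
      have := Nat.le_of_dvd (by omega) h1
      omega
    · exact ⟨fun h => cast_k_ne_zero hn hk hk' (by linear_combination -h),
        Or.inr (Or.inl (by ring))⟩
    · exact ⟨fun h => cast_k_ne_zero hn hk hk' (by linear_combination h),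
        Or.inr (Or.inr (Or.inr (by ring)))⟩

lemma deg_four (hn : 4 ≤ n) (hk : 1 ≤ k) (hk' : k ≤ n / 2) (hk1 : k ≠ 1) (hkn : 2 * k ≠ n)
    (v : ZMod n) : ((circ n k).neighborSet v).ncard = 4 := by
  have : NeZero n := ⟨by omega⟩
  rw [neighborSet_eq hn hk hk']
  have e1 : v + 1 ≠ v - 1 := fun h => two_nz hn (by linear_combination h)
  have e2 : v + 1 ≠ v + (k : ℕ) := fun h =>
    hk1 (cast_k_eq_one hn hk hk' (by linear_combination -h))
  have e3 : v + 1 ≠ v - (k : ℕ) := fun h =>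
    cast_k_succ_ne_zero hn hk hk' (by linear_combination h)
  have e4 : v - 1 ≠ v + (k : ℕ) := fun h =>
    cast_k_succ_ne_zero hn hk hk' (by linear_combination -h)
  have e5 : v - 1 ≠ v - (k : ℕ) := fun h =>
    hk1 (cast_k_eq_one hn hk hk' (by linear_combination h))
  have e6 : v + (k : ℕ) ≠ v - (k : ℕ) := fun h => by
    have h1 : (((2 * k : ℕ)) : ZMod n) = 0 := by push_cast; linear_combination h
    rw [ZMod.natCast_eq_zero_iff] at h1
    have := Nat.le_of_dvd (by omega) h1
    omega
  rw [Set.ncard_insert_of_notMem (by simp [e1, e2, e3]),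
    Set.ncard_insert_of_notMem (by simp [e4, e5]),
    Set.ncard_pair e6]

lemma deg_three (hn : 4 ≤ n) (hk : 1 ≤ k) (hk' : k ≤ n / 2) (hkn : 2 * k = n)
    (v : ZMod n) : ((circ n k).neighborSet v).ncard = 3 := by
  have : NeZero n := ⟨by omega⟩
  have hk1 : k ≠ 1 := by omega
  rw [neighborSet_eq hn hk hk']
  have hdup : v - (k : ℕ) = v + (k : ℕ) := by
    have h1 : (((2 * k : ℕ)) : ZMod n) = 0 := by
      rw [hkn]; exact ZMod.natCast_self n
    have : ((k : ℕ) : ZMod n) + ((k : ℕ) : ZMod n) = 0 := by push_cast at h1 ⊢; linear_combination h1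
    linear_combination -this
  rw [show ({v + 1, v - 1, v + (k : ℕ), v - (k : ℕ)} : Set (ZMod n))
      = {v + 1, v - 1, v + (k : ℕ)} by rw [hdup]; simp]
  have e1 : v + 1 ≠ v - 1 := fun h => two_nz hn (by linear_combination h)
  have e2 : v + 1 ≠ v + (k : ℕ) := fun h =>
    hk1 (cast_k_eq_one hn hk hk' (by linear_combination -h))
  have e4 : v - 1 ≠ v + (k : ℕ) := fun h =>
    cast_k_succ_ne_zero hn hk hk' (by linear_combination -h)
  rw [Set.ncard_insert_of_notMem (by simp [e1, e2]), Set.ncard_pair e4]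

lemma deg_two (hn : 4 ≤ n) (hk1 : k = 1) (v : ZMod n) :
    ((circ n k).neighborSet v).ncard = 2 := by
  have : NeZero n := ⟨by omega⟩
  subst hk1
  rw [neighborSet_eq hn le_rfl (by omega)]
  have e1 : v + 1 ≠ v - 1 := fun h => two_nz hn (by linear_combination h)
  rw [show ({v + 1, v - 1, v + ((1 : ℕ) : ZMod n), v - ((1 : ℕ) : ZMod n)} : Set (ZMod n))
      = {v + 1, v - 1} by push_cast; simp]
  exact Set.ncard_pair e1

lemma maxDeg_const {c : ℕ} (h : ∀ v : ZMod n, ((circ n k).neighborSet v).ncard = c)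
    (hn : 4 ≤ n) : maxDeg (circ n k) = c := by
  have : NeZero n := ⟨by omega⟩
  unfold maxDeg
  have : (Set.range fun v : ZMod n => ((circ n k).neighborSet v).ncard) = {c} := by
    simp only [h]
    exact Set.range_const
  rw [this, csSup_singleton]

-- ===== lower bound =====

lemma mbt_lower (hn : 4 ≤ n) {m c : ℕ}
    (hdeg : ∀ v : ZMod n, ((circ n k).neighborSet v).ncard = c)
    (h : HasMBE (circ n k) m) : c ≤ m := by
  have : NeZero n := ⟨by omega⟩
  obtain ⟨σ, col, hsym, hprop, hcross⟩ := h
  have hinj : Set.InjOn (col 0) ((circ n k).neighborSet 0) := by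
    intro v hv w hw hvw
    by_contra hne
    exact hprop 0 v w hv hw hne hvw
  calc c = ((circ n k).neighborSet 0).ncard := (hdeg 0).symm
    _ = ((col 0) '' ((circ n k).neighborSet 0)).ncard :=
        (Set.ncard_image_of_injOn hinj).symm
    _ ≤ (Set.univ : Set (Fin m)).ncard :=
        Set.ncard_le_ncard (Set.subset_univ _) Set.finite_univ
    _ = m := by simp [Set.ncard_univ]

-- ===== the three upper bounds =====

lemma upper_two (hn : 4 ≤ n) (hne : Even n) (hko : Odd k) (hk1 : k = 1) :
    HasMBE (circ n k) 2 := by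
  have : NeZero n := ⟨by omega⟩
  have hd : (2 : ℕ) ∣ n := hne.two_dvd
  have d13 : (1 : ZMod n) ≠ 3 := one_ne_three hn
  refine hasMBE_of hd hko (fun x => if x = 1 then (0 : Fin 2) else 1) ?_
  subst hk1
  have h1 : ((1 : ℕ) : ZMod n) = 1 := by push_cast; ring
  rw [h1]
  have e1 : (2 : ZMod n) - 1 = 1 := by ring
  have e2 : (2 : ZMod n) + 1 = 3 := by ring
  rw [e1, e2]
  intro x hx y hy hxy
  simp only [Set.mem_insert_iff, Set.mem_singleton_iff] at hx hy
  rcases hx with rfl | rfl | rfl | rfl <;> rcases hy with rfl | rfl | rfl | rfl <;>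
    first
      | rfl
      | (exfalso; split_ifs at hxy <;>
          first | exact absurd hxy (by decide) | simp_all)

lemma upper_three (hn : 4 ≤ n) (hne : Even n) (hk : 1 ≤ k) (hk' : k ≤ n / 2)
    (hko : Odd k) (hkn : 2 * k = n) :
    HasMBE (circ n k) 3 := by
  have : NeZero n := ⟨by omega⟩
  have hd : (2 : ℕ) ∣ n := hne.two_dvd
  have hk1 : k ≠ 1 := by omega
  have d13 : (1 : ZMod n) ≠ 3 := one_ne_three hn
  have dm1 : (2 : ZMod n) - (k : ℕ) ≠ 1 := two_sub_ne_one hn hk hk' hk1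
  have dm3 : (2 : ZMod n) - (k : ℕ) ≠ 3 := two_sub_ne_three hn hk hk'
  have dp1 : (2 : ZMod n) + (k : ℕ) ≠ 1 := two_add_ne_one hn hk hk'
  have dp3 : (2 : ZMod n) + (k : ℕ) ≠ 3 := two_add_ne_three hn hk hk' hk1
  have hdup : (2 : ZMod n) - (k : ℕ) = (2 : ZMod n) + (k : ℕ) := by
    have h1 : (((2 * k : ℕ)) : ZMod n) = 0 := by rw [hkn]; exact ZMod.natCast_self n
    push_cast at h1
    linear_combination -h1
  refine hasMBE_of hd hko
    (fun x => if x = 1 then (0 : Fin 3) else if x = 3 then 1 else 2) ?_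
  intro x hx y hy hxy
  simp only [Set.mem_insert_iff, Set.mem_singleton_iff] at hx hy
  rcases hx with rfl | rfl | rfl | rfl <;> rcases hy with rfl | rfl | rfl | rfl <;>
    first
      | rfl
      | exact hdup
      | exact hdup.symm
      | (exfalso; split_ifs at hxy <;>
          first | exact absurd hxy (by decide) | simp_all)

lemma upper_four (hn : 4 ≤ n) (hne : Even n) (hk : 1 ≤ k) (hk' : k ≤ n / 2)
    (hko : Odd k) (hk1 : k ≠ 1) (hkn : 2 * k ≠ n) :
    HasMBE (circ n k) 4 := by
  have : NeZero n := ⟨by omega⟩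
  have hd : (2 : ℕ) ∣ n := hne.two_dvd
  have d13 : (1 : ZMod n) ≠ 3 := one_ne_three hn
  have dm1 : (2 : ZMod n) - (k : ℕ) ≠ 1 := two_sub_ne_one hn hk hk' hk1
  have dm3 : (2 : ZMod n) - (k : ℕ) ≠ 3 := two_sub_ne_three hn hk hk'
  have dp1 : (2 : ZMod n) + (k : ℕ) ≠ 1 := two_add_ne_one hn hk hk'
  have dp3 : (2 : ZMod n) + (k : ℕ) ≠ 3 := two_add_ne_three hn hk hk' hk1
  have dmp : (2 : ZMod n) - (k : ℕ) ≠ (2 : ZMod n) + (k : ℕ) :=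
    two_sub_ne_two_add hn hk hk' hkn
  refine hasMBE_of hd hko
    (fun x => if x = 1 then (0 : Fin 4) else if x = 3 then 1
      else if x = (2 : ZMod n) - (k : ℕ) then 2 else 3) ?_
  intro x hx y hy hxy
  simp only [Set.mem_insert_iff, Set.mem_singleton_iff] at hx hy
  rcases hx with rfl | rfl | rfl | rfl <;> rcases hy with rfl | rfl | rfl | rfl <;>
    first
      | rfl
      | (exfalso; split_ifs at hxy <;>
          first | exact absurd hxy (by decide) | simp_all)

end Main


/-- for `n` even and `k` odd, `C(n,k)` is dispersable: `mbt = Δ`. -/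
theorem stmt12 (n k : ℕ) (hn : 4 ≤ n) (hne : Even n) (hk : 1 ≤ k) (hk' : k ≤ n / 2)
    (hko : Odd k) :
    mbt (circ n k) = maxDeg (circ n k) := by
  unfold mbt
  by_cases hk1 : k = 1
  · rw [maxDeg_const (deg_two hn hk1) hn]
    have hup := upper_two hn hne hko hk1
    exact le_antisymm (Nat.sInf_le hup)
      (le_csInf ⟨2, hup⟩ fun m hm => mbt_lower hn (deg_two hn hk1) hm)
  · by_cases hkn : 2 * k = n
    · rw [maxDeg_const (deg_three hn hk hk' hkn) hn]
      have hup := upper_three hn hne hk hk' hko hkn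
      exact le_antisymm (Nat.sInf_le hup)
        (le_csInf ⟨3, hup⟩ fun m hm => mbt_lower hn (deg_three hn hk hk' hkn) hm)
    · rw [maxDeg_const (deg_four hn hk hk' hk1 hkn) hn]
      have hup := upper_four hn hne hk hk' hko hk1 hkn
      exact le_antisymm (Nat.sInf_le hup)
        (le_csInf ⟨4, hup⟩ fun m hm => mbt_lower hn (deg_four hn hk hk' hk1 hkn) hm)
end
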